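/- Let N ≥ 7 be an integer, b₁, b₂ > 0, and let t ∈ (0,1) satisfy γ₁(t) > 0. Let (λ₀(t),λ₁(t)) ∈ (0,∞)² be the unique critical point of (λ₀,λ₁) ↦ f₃(λ₀,λ₁,t), given by λ₁(t)^{(N−2)/2} = √(b₂/(2·b₁·β(t))) and λ₀(t)^{(N−2)/2} = α(t)·λ₁(t)^{(N−2)/2} with α(t) = −τ(t) + √(τ(t)² + γ₁(t)) and β(t) = γ₁(t) + τ(t)·α(t). Then the 2×2 Hessian matrix of (λ₀,λ₁) ↦ f₃(λ₀,λ₁,t) at (λ₀(t),λ₁(t)) is positive definite. -/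

import Mathlib

open Real Filter Set

/-- `τ(t) = t^{-(N-2)} − 1`. -/
noncomputable def tau (N : ℕ) (t : ℝ) : ℝ := t ^ (-((N : ℝ) - 2)) - 1

/-- `γ₁(t) = (1−t²)^{-(N−2)} − 2·(√3·t)^{-(N−2)} + 2·(t⁴+t²+1)^{-(N−2)/2}`. -/
noncomputable def gamma1 (N : ℕ) (t : ℝ) : ℝ :=
  (1 - t ^ 2) ^ (-((N : ℝ) - 2)) - 2 * (Real.sqrt 3 * t) ^ (-((N : ℝ) - 2)) +
    2 * (t ^ 4 + t ^ 2 + 1) ^ (-((N : ℝ) - 2) / 2)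

/-- `f₃(λ₀,λ₁,t)`. -/
noncomputable def f3 (N : ℕ) (b1 b2 : ℝ) (l0 l1 t : ℝ) : ℝ :=
  b1 * (l0 ^ ((N : ℝ) - 2) + 3 * gamma1 N t * l1 ^ ((N : ℝ) - 2) +
    6 * tau N t * l0 ^ (((N : ℝ) - 2) / 2) * l1 ^ (((N : ℝ) - 2) / 2)) -
  b2 * (((N : ℝ) - 2) / 2) * Real.log (l1 ^ 3 * l0)

/-- `α(t) = −τ(t) + √(τ(t)² + γ₁(t))`. -/
noncomputable def alphaF (N : ℕ) (t : ℝ) : ℝ :=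
  -tau N t + Real.sqrt ((tau N t) ^ 2 + gamma1 N t)

/-- `β(t) = γ₁(t) + τ(t)·α(t)`. -/
noncomputable def betaF (N : ℕ) (t : ℝ) : ℝ :=
  gamma1 N t + tau N t * alphaF N t


lemma posDef_fin_two {a b d : ℝ} (ha : 0 < a) (h : b * b < a * d) :
    (!![a, b; b, d]).PosDef := by
  rw [Matrix.posDef_iff_dotProduct_mulVec]
  constructor
  · ext i j
    fin_cases i <;> fin_cases j <;>
      simp [Matrix.conjTranspose, Matrix.transpose]
  · intro x hx
    have hq : dotProduct (star x) (Matrix.mulVec (!![a, b; b, d]) x)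
        = a * (x 0)^2 + 2 * b * (x 0) * (x 1) + d * (x 1)^2 := by
      simp [Matrix.mulVec, dotProduct, Fin.sum_univ_two]; ring
    rw [hq]
    rcases eq_or_ne (x 1) 0 with h1 | h1
    · have h0 : x 0 ≠ 0 := by
        intro h0; exact hx (by ext i; fin_cases i <;> simp [h0, h1])
      have := mul_self_pos.2 h0
      rw [h1]; nlinarith
    · nlinarith [sq_nonneg (a * x 0 + b * x 1), mul_pos (sub_pos.2 h) (mul_self_pos.2 h1),
        mul_pos ha (mul_pos (sub_pos.2 h) (mul_self_pos.2 h1))]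

lemma L1 (A c C K D p q x : ℝ) (hx : 0 < x) (hD : 0 < D) :
    HasDerivAt (fun x => A * (x ^ p + c + C * x ^ q) - K * Real.log (D * x))
      (A * (p * x ^ (p - 1) + C * (q * x ^ (q - 1))) - K * x⁻¹) x := by
  have hDx : D * x ≠ 0 := by positivity
  have h1 : HasDerivAt (fun x : ℝ => x ^ p) (p * x ^ (p - 1)) x :=
    Real.hasDerivAt_rpow_const (Or.inl hx.ne')
  have h2 : HasDerivAt (fun x : ℝ => x ^ q) (q * x ^ (q - 1)) x :=
    Real.hasDerivAt_rpow_const (Or.inl hx.ne')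
  have h3 : HasDerivAt (fun x : ℝ => Real.log (D * x)) ((D * 1) / (D * x)) x :=
    (((hasDerivAt_id x).const_mul D)).log hDx
  have h3' : HasDerivAt (fun x : ℝ => Real.log (D * x)) x⁻¹ x := by
    convert h3 using 1
    field_simp
  exact (((h1.add_const c).add (h2.const_mul C)).const_mul A).sub (h3'.const_mul K)

lemma L2 (A C K p q x : ℝ) (hx : 0 < x) :
    HasDerivAt (fun x => A * (p * x ^ (p - 1) + C * (q * x ^ (q - 1))) - K * x⁻¹)
      (A * (p * ((p - 1) * x ^ (p - 2)) + C * (q * ((q - 1) * x ^ (q - 2)))) + K * (x ^ 2)⁻¹) x := by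
  have h1 : HasDerivAt (fun x : ℝ => x ^ (p - 1)) ((p - 1) * x ^ (p - 1 - 1)) x :=
    Real.hasDerivAt_rpow_const (Or.inl hx.ne')
  have h2 : HasDerivAt (fun x : ℝ => x ^ (q - 1)) ((q - 1) * x ^ (q - 1 - 1)) x :=
    Real.hasDerivAt_rpow_const (Or.inl hx.ne')
  have h3 : HasDerivAt (fun x : ℝ => x⁻¹) (-(x ^ 2)⁻¹) x := hasDerivAt_inv hx.ne'
  have h := (((h1.const_mul p).add ((h2.const_mul q).const_mul C)).const_mul A).sub
    (h3.const_mul K)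
  have heq : A * (p * ((p - 1) * x ^ (p - 1 - 1)) + C * (q * ((q - 1) * x ^ (q - 1 - 1))))
      - K * -(x ^ 2)⁻¹
      = A * (p * ((p - 1) * x ^ (p - 2)) + C * (q * ((q - 1) * x ^ (q - 2)))) + K * (x ^ 2)⁻¹ := by
    rw [show p - 1 - 1 = p - 2 by ring, show q - 1 - 1 = q - 2 by ring]; ring
  exact heq ▸ h

lemma L3 (A c C g K x p q y : ℝ) (hx : x ≠ 0) (hy : 0 < y) :
    HasDerivAt (fun y => A * (c + 3 * g * y ^ p + C * y ^ q) - K * Real.log (y ^ 3 * x))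
      (A * (3 * g * (p * y ^ (p - 1)) + C * (q * y ^ (q - 1))) - K * (3 * y⁻¹)) y := by
  have hxy : y ^ 3 * x ≠ 0 := mul_ne_zero (pow_ne_zero 3 hy.ne') hx
  have h1 : HasDerivAt (fun y : ℝ => y ^ p) (p * y ^ (p - 1)) y :=
    Real.hasDerivAt_rpow_const (Or.inl hy.ne')
  have h2 : HasDerivAt (fun y : ℝ => y ^ q) (q * y ^ (q - 1)) y :=
    Real.hasDerivAt_rpow_const (Or.inl hy.ne')
  have h3 : HasDerivAt (fun y : ℝ => y ^ 3 * x) (((3 : ℕ) : ℝ) * y ^ 2 * x) y :=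
    (hasDerivAt_pow 3 y).mul_const x
  have h4 := h3.log hxy
  have h4' : HasDerivAt (fun y : ℝ => Real.log (y ^ 3 * x)) (3 * y⁻¹) y := by
    convert h4 using 1
    field_simp
    ring
  exact ((((h1.const_mul (3 * g)).const_add c).add (h2.const_mul C)).const_mul A).sub
    (h4'.const_mul K)

lemma L4 (c C q x : ℝ) (hx : 0 < x) :
    HasDerivAt (fun x => c + C * x ^ q) (C * (q * x ^ (q - 1))) x :=
  ((Real.hasDerivAt_rpow_const (Or.inl hx.ne')).const_mul C).const_add c

lemma L5 (A C g K p q y : ℝ) (hy : 0 < y) :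
    HasDerivAt (fun y => A * (3 * g * (p * y ^ (p - 1)) + C * (q * y ^ (q - 1))) - K * (3 * y⁻¹))
      (A * (3 * g * (p * ((p - 1) * y ^ (p - 2))) + C * (q * ((q - 1) * y ^ (q - 2))))
        + K * (3 * (y ^ 2)⁻¹)) y := by
  have h1 : HasDerivAt (fun y : ℝ => y ^ (p - 1)) ((p - 1) * y ^ (p - 1 - 1)) y :=
    Real.hasDerivAt_rpow_const (Or.inl hy.ne')
  have h2 : HasDerivAt (fun y : ℝ => y ^ (q - 1)) ((q - 1) * y ^ (q - 1 - 1)) y :=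
    Real.hasDerivAt_rpow_const (Or.inl hy.ne')
  have h3 : HasDerivAt (fun y : ℝ => y⁻¹) (-(y ^ 2)⁻¹) y := hasDerivAt_inv hy.ne'
  have h := ((((h1.const_mul p).const_mul (3 * g)).add
    ((h2.const_mul q).const_mul C)).const_mul A).sub ((h3.const_mul 3).const_mul K)
  have heq : A * (3 * g * (p * ((p - 1) * y ^ (p - 1 - 1))) + C * (q * ((q - 1) * y ^ (q - 1 - 1))))
      - K * (3 * -(y ^ 2)⁻¹)
      = A * (3 * g * (p * ((p - 1) * y ^ (p - 2))) + C * (q * ((q - 1) * y ^ (q - 2))))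
        + K * (3 * (y ^ 2)⁻¹) := by
    rw [show p - 1 - 1 = p - 2 by ring, show q - 1 - 1 = q - 2 by ring]; ring
  exact heq ▸ h


lemma detlem (b1 q α τ m x y : ℝ) (hb1 : 0 < b1) (hq : 1 < q) (hα : 0 < α)
    (hτ : 0 < τ) (hm : 0 < m) (hx : 0 < x) (hy : 0 < y) :
    (6*b1*τ*q^2*α*m^2/(x*y))^2
      < ((b1*m^2/x^2) * (2*q*(2*q-1)*α^2 + 6*τ*q*(q-1)*α + 2*q*(α^2+3*τ*α)))
        * ((b1*m^2/y^2) * (6*q*(2*q-1)*(α^2+2*τ*α) + 6*τ*q*(q-1)*α + 6*q*(α^2+3*τ*α))) := by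
  have hc : 0 < b1^2*m^4*q^4*α^2/(x^2*y^2) := by positivity
  have hfact : (36*τ^2) * (b1^2*m^4*q^4*α^2/(x^2*y^2))
      < (12*(2*α+3*τ)*(2*α+5*τ)) * (b1^2*m^4*q^4*α^2/(x^2*y^2)) := by
    apply mul_lt_mul_of_pos_right _ hc
    nlinarith [mul_pos hα hτ, sq_nonneg α, mul_pos hα hα, sq_nonneg τ]
  calc (6*b1*τ*q^2*α*m^2/(x*y))^2
      = (36*τ^2) * (b1^2*m^4*q^4*α^2/(x^2*y^2)) := by ring
    _ < (12*(2*α+3*τ)*(2*α+5*τ)) * (b1^2*m^4*q^4*α^2/(x^2*y^2)) := hfact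
    _ = ((b1*m^2/x^2) * (2*q*(2*q-1)*α^2 + 6*τ*q*(q-1)*α + 2*q*(α^2+3*τ*α)))
        * ((b1*m^2/y^2) * (6*q*(2*q-1)*(α^2+2*τ*α) + 6*τ*q*(q-1)*α + 6*q*(α^2+3*τ*α))) := by
      ring

set_option maxHeartbeats 1000000 in
theorem stmt_2 (N : ℕ) (hN : 7 ≤ N) (b1 b2 : ℝ) (hb1 : 0 < b1) (hb2 : 0 < b2)
    (t : ℝ) (ht : t ∈ Ioo (0 : ℝ) 1) (hg : 0 < gamma1 N t)
    (l0 l1 : ℝ) (hl0pos : 0 < l0) (hl1pos : 0 < l1)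
    (hl1 : l1 ^ (((N : ℝ) - 2) / 2) = Real.sqrt (b2 / (2 * b1 * betaF N t)))
    (hl0 : l0 ^ (((N : ℝ) - 2) / 2) = alphaF N t * l1 ^ (((N : ℝ) - 2) / 2)) :
    (!![deriv (deriv (fun x => f3 N b1 b2 x l1 t)) l0,
        deriv (fun x => deriv (fun y => f3 N b1 b2 x y t) l1) l0;
        deriv (fun y => deriv (fun x => f3 N b1 b2 x y t) l0) l1,
        deriv (deriv (fun y => f3 N b1 b2 l0 y t)) l1]).PosDef := by
  obtain ⟨ht0, ht1⟩ := ht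
  set τ := tau N t with hτdef
  set g := gamma1 N t with hgdef
  set α := alphaF N t with hαdef
  set β := betaF N t with hβdef
  set p : ℝ := (N : ℝ) - 2 with hpdef
  set q : ℝ := p / 2 with hqdef
  clear_value τ g α β p q
  have hN7 : (7 : ℝ) ≤ (N : ℝ) := by exact_mod_cast hN
  have hp5 : (5 : ℝ) ≤ p := by rw [hpdef]; linarith
  have hq0 : 0 < q := by rw [hqdef]; linarith
  have hq1 : 0 < q - 1 := by rw [hqdef]; linarith
  have hq1' : 1 < q := by linarith
  have hp0 : 0 < p := by linarith
  have hp1 : 0 < p - 1 := by linarith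
  have hpq : p = q + q := by rw [hqdef]; ring
  have hτ0 : 0 < τ := by
    have h1 : 1 < t ^ (-((N : ℝ) - 2)) :=
      (Real.one_lt_rpow_iff_of_pos ht0).2 (Or.inr ⟨ht1, by linarith⟩)
    simp only [hτdef, tau]; linarith
  have hαexp : α = -τ + Real.sqrt (τ ^ 2 + g) := by
    rw [hαdef, alphaF, ← hτdef, ← hgdef]
  have hst : τ < Real.sqrt (τ ^ 2 + g) := by
    have h1 := Real.sqrt_lt_sqrt (sq_nonneg τ) (lt_add_of_pos_right (τ ^ 2) hg)
    rwa [Real.sqrt_sq hτ0.le] at h1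
  have hα0 : 0 < α := by rw [hαexp]; linarith
  have hsq : Real.sqrt (τ ^ 2 + g) ^ 2 = τ ^ 2 + g := Real.sq_sqrt (by positivity)
  have hαg : α ^ 2 + 2 * τ * α = g := by rw [hαexp]; linear_combination hsq
  have hgid : g = α ^ 2 + 2 * τ * α := hαg.symm
  have hβexp : β = g + τ * α := by rw [hβdef, betaF, ← hαdef, ← hτdef, ← hgdef]
  have hβx : β = α ^ 2 + 3 * τ * α := by rw [hβexp]; linear_combination -hαg
  have hβ0 : 0 < β := by rw [hβx]; nlinarith [mul_pos hτ0 hα0, sq_nonneg α]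
  set a := l0 ^ q with hadef
  set m := l1 ^ q with hmdef
  clear_value a m
  have ha0 : 0 < a := by rw [hadef]; exact Real.rpow_pos_of_pos hl0pos q
  have hm0 : 0 < m := by rw [hmdef]; exact Real.rpow_pos_of_pos hl1pos q
  have hmsq : m ^ 2 = b2 / (2 * b1 * β) := by rw [hl1, Real.sq_sqrt (by positivity)]
  have hb2m : b2 = 2 * b1 * β * m ^ 2 := by rw [hmsq]; field_simp
  -- power rewrites
  have r1 : l0 ^ (p - 2) = a ^ 2 / l0 ^ 2 := by
    rw [show p - 2 = q + (q - 2) by rw [hpq]; ring, Real.rpow_add hl0pos,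
      Real.rpow_sub hl0pos, Real.rpow_two, ← hadef]
    ring
  have r2 : l0 ^ (q - 2) = a / l0 ^ 2 := by
    rw [Real.rpow_sub hl0pos, Real.rpow_two, ← hadef]
  have r3 : l0 ^ (q - 1) = a / l0 := by
    rw [Real.rpow_sub hl0pos, Real.rpow_one, ← hadef]
  have r1' : l1 ^ (p - 2) = m ^ 2 / l1 ^ 2 := by
    rw [show p - 2 = q + (q - 2) by rw [hpq]; ring, Real.rpow_add hl1pos,
      Real.rpow_sub hl1pos, Real.rpow_two, ← hmdef]
    ring
  have r2' : l1 ^ (q - 2) = m / l1 ^ 2 := by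
    rw [Real.rpow_sub hl1pos, Real.rpow_two, ← hmdef]
  have r3' : l1 ^ (q - 1) = m / l1 := by
    rw [Real.rpow_sub hl1pos, Real.rpow_one, ← hmdef]
  -- function normalizations
  have hf3x : ∀ y : ℝ, (fun x => f3 N b1 b2 x y t)
      = fun x => b1 * (x ^ p + 3 * g * y ^ p + (6 * τ * y ^ q) * x ^ q)
        - (b2 * q) * Real.log (y ^ 3 * x) := by
    intro y; funext x
    simp only [f3, ← hpdef, ← hqdef, ← hτdef, ← hgdef]
    ring
  have hf3y : ∀ x : ℝ, (fun y => f3 N b1 b2 x y t)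
      = fun y => b1 * (x ^ p + 3 * g * y ^ p + (6 * τ * x ^ q) * y ^ q)
        - (b2 * q) * Real.log (y ^ 3 * x) := by
    intro x; funext y
    simp only [f3, ← hpdef, ← hqdef, ← hτdef, ← hgdef]
  have keyx : ∀ y : ℝ, 0 < y → ∀ x : ℝ, 0 < x →
      deriv (fun x => f3 N b1 b2 x y t) x
        = b1 * (p * x ^ (p - 1) + (6 * τ * y ^ q) * (q * x ^ (q - 1))) - (b2 * q) * x⁻¹ := by
    intro y hy x hx
    rw [hf3x y]
    exact (L1 b1 (3 * g * y ^ p) (6 * τ * y ^ q) (b2 * q) (y ^ 3) p q x hx (by positivity)).deriv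
  have keyy : ∀ x : ℝ, 0 < x → ∀ y : ℝ, 0 < y →
      deriv (fun y => f3 N b1 b2 x y t) y
        = b1 * (3 * g * (p * y ^ (p - 1)) + (6 * τ * x ^ q) * (q * y ^ (q - 1)))
          - (b2 * q) * (3 * y⁻¹) := by
    intro x hx y hy
    rw [hf3y x]
    exact (L3 b1 (x ^ p) (6 * τ * x ^ q) g (b2 * q) x p q y hx.ne' hy).deriv
  -- entries
  have e11 : deriv (deriv (fun x => f3 N b1 b2 x l1 t)) l0
      = b1 * (p * ((p - 1) * l0 ^ (p - 2)) + (6 * τ * m) * (q * ((q - 1) * l0 ^ (q - 2))))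
        + (b2 * q) * (l0 ^ 2)⁻¹ := by
    have hev : deriv (fun x => f3 N b1 b2 x l1 t)
        =ᶠ[nhds l0] fun x => b1 * (p * x ^ (p - 1) + (6 * τ * m) * (q * x ^ (q - 1)))
          - (b2 * q) * x⁻¹ := by
      filter_upwards [eventually_gt_nhds hl0pos] with x hx
      rw [keyx l1 hl1pos x hx, ← hmdef]
    rw [hev.deriv_eq]
    exact (L2 b1 (6 * τ * m) (b2 * q) p q l0 hl0pos).deriv
  have e22 : deriv (deriv (fun y => f3 N b1 b2 l0 y t)) l1
      = b1 * (3 * g * (p * ((p - 1) * l1 ^ (p - 2)))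
          + (6 * τ * a) * (q * ((q - 1) * l1 ^ (q - 2)))) + (b2 * q) * (3 * (l1 ^ 2)⁻¹) := by
    have hev : deriv (fun y => f3 N b1 b2 l0 y t)
        =ᶠ[nhds l1] fun y => b1 * (3 * g * (p * y ^ (p - 1)) + (6 * τ * a) * (q * y ^ (q - 1)))
          - (b2 * q) * (3 * y⁻¹) := by
      filter_upwards [eventually_gt_nhds hl1pos] with y hy
      rw [keyy l0 hl0pos y hy, ← hadef]
    rw [hev.deriv_eq]
    exact (L5 b1 (6 * τ * a) g (b2 * q) p q l1 hl1pos).deriv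
  have e12 : deriv (fun x => deriv (fun y => f3 N b1 b2 x y t) l1) l0
      = (b1 * (6 * τ * (q * l1 ^ (q - 1)))) * (q * l0 ^ (q - 1)) := by
    have hev : (fun x => deriv (fun y => f3 N b1 b2 x y t) l1)
        =ᶠ[nhds l0] fun x => (b1 * (3 * g * (p * l1 ^ (p - 1))) - (b2 * q) * (3 * l1⁻¹))
          + (b1 * (6 * τ * (q * l1 ^ (q - 1)))) * x ^ q := by
      filter_upwards [eventually_gt_nhds hl0pos] with x hx
      rw [keyy x hx l1 hl1pos]; ring
    rw [hev.deriv_eq]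
    exact (L4 _ _ q l0 hl0pos).deriv
  have e21 : deriv (fun y => deriv (fun x => f3 N b1 b2 x y t) l0) l1
      = (b1 * (6 * τ * (q * l0 ^ (q - 1)))) * (q * l1 ^ (q - 1)) := by
    have hev : (fun y => deriv (fun x => f3 N b1 b2 x y t) l0)
        =ᶠ[nhds l1] fun y => (b1 * (p * l0 ^ (p - 1)) - (b2 * q) * l0⁻¹)
          + (b1 * (6 * τ * (q * l0 ^ (q - 1)))) * y ^ q := by
      filter_upwards [eventually_gt_nhds hl1pos] with y hy
      rw [keyx y hy l0 hl0pos]; ring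
    rw [hev.deriv_eq]
    exact (L4 _ _ q l1 hl1pos).deriv
  rw [e11, e12, e21, e22,
    show (b1 * (6 * τ * (q * l0 ^ (q - 1)))) * (q * l1 ^ (q - 1))
      = (b1 * (6 * τ * (q * l1 ^ (q - 1)))) * (q * l0 ^ (q - 1)) by ring]
  apply posDef_fin_two
  · positivity
  · rw [r1, r2, r3, r1', r2', r3', hl0, hb2m, hβx, hgid, hpq]
    calc b1 * (6 * τ * (q * (m / l1))) * (q * (α * m / l0))
          * (b1 * (6 * τ * (q * (m / l1))) * (q * (α * m / l0)))
        = (6*b1*τ*q^2*α*m^2/(l0*l1))^2 := by ring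
      _ < ((b1*m^2/l0^2) * (2*q*(2*q-1)*α^2 + 6*τ*q*(q-1)*α + 2*q*(α^2+3*τ*α)))
            * ((b1*m^2/l1^2) * (6*q*(2*q-1)*(α^2+2*τ*α) + 6*τ*q*(q-1)*α
              + 6*q*(α^2+3*τ*α))) :=
          detlem b1 q α τ m l0 l1 hb1 hq1' hα0 hτ0 hm0 hl0pos hl1pos
      _ = (b1 * ((q + q) * ((q + q - 1) * ((α * m) ^ 2 / l0 ^ 2))
              + 6 * τ * m * (q * ((q - 1) * (α * m / l0 ^ 2))))
            + 2 * b1 * (α ^ 2 + 3 * τ * α) * m ^ 2 * q * (l0 ^ 2)⁻¹) *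
          (b1 * (3 * (α ^ 2 + 2 * τ * α) * ((q + q) * ((q + q - 1) * (m ^ 2 / l1 ^ 2)))
              + 6 * τ * (α * m) * (q * ((q - 1) * (m / l1 ^ 2))))
            + 2 * b1 * (α ^ 2 + 3 * τ * α) * m ^ 2 * q * (3 * (l1 ^ 2)⁻¹)) := by ring
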